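/- arXiv:2104.11933 — 2 statements merged into one kernel-verified Lean document; each statement's English description precedes it below -/
import Mathlib

section
/- Given three pairwise orthogonal vectors in ℂ² ⊗ ℂ² of which at most one is a product vector, any orthogonal projective measurement {Q, I−Q} by Alice (acting as Q ⊗ I) that keeps all three resulting vectors nonzero and pairwise orthogonal must have Q ∈ {0, I}. (Special case: this holds for the triple |00⟩+|11⟩, |00⟩−|11⟩, |01⟩−|10⟩.) -/
open Matrix

noncomputable section

def dot {n : Type*} [Fintype n] (v w : n → ℂ) : ℂ := ∑ p, star (v p) * w p

def prodVec (v : Fin 2 × Fin 2 → ℂ) : Prop :=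
  ∃ a b : Fin 2 → ℂ, v = fun p => a p.1 * b p.2

/-- The action of Alice's operator Q (as Q ⊗ I) on a vector of ℂ² ⊗ ℂ². -/
def actQ (Q : Matrix (Fin 2) (Fin 2) ℂ) (v : Fin 2 × Fin 2 → ℂ) : Fin 2 × Fin 2 → ℂ :=
  fun p => ∑ i : Fin 2, Q p.1 i * v (i, p.2)

lemma dot_self_ne_zero (b : Fin 2 → ℂ) (hb : b ≠ 0) : dot b b ≠ 0 := by
  intro h
  apply hb
  have h2 : ((Complex.normSq (b 0) + Complex.normSq (b 1) : ℝ) : ℂ) = 0 := by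
    rw [← h]
    simp [dot, Fin.sum_univ_two, Complex.normSq_eq_conj_mul_self, Complex.star_def]
  have h3 : Complex.normSq (b 0) + Complex.normSq (b 1) = 0 := by exact_mod_cast h2
  have h4 : Complex.normSq (b 0) = 0 ∧ Complex.normSq (b 1) = 0 := by
    constructor <;> nlinarith [Complex.normSq_nonneg (b 0), Complex.normSq_nonneg (b 1)]
  funext p
  fin_cases p
  · exact Complex.normSq_eq_zero.mp h4.1
  · exact Complex.normSq_eq_zero.mp h4.2

lemma no_three_orth (a b c : Fin 2 → ℂ) (ha : a ≠ 0) (hb : b ≠ 0) (hc : c ≠ 0)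
    (hab : dot a b = 0) (hac : dot a c = 0) (hbc : dot b c = 0) : False := by
  have ha0 : star (a 0) * b 0 + star (a 1) * b 1 = 0 := by
    simpa [dot, Fin.sum_univ_two] using hab
  have ha1 : star (a 0) * c 0 + star (a 1) * c 1 = 0 := by
    simpa [dot, Fin.sum_univ_two] using hac
  have hb1 : star (b 0) * c 0 + star (b 1) * c 1 = 0 := by
    simpa [dot, Fin.sum_univ_two] using hbc
  have hD : b 0 * c 1 - b 1 * c 0 = 0 := by
    have hA : star (a 0) ≠ 0 ∨ star (a 1) ≠ 0 := by
      by_contra hcon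
      push_neg at hcon
      apply ha
      funext p
      fin_cases p
      · exact star_eq_zero.mp hcon.1
      · exact star_eq_zero.mp hcon.2
    rcases hA with hA | hA
    · have h : star (a 0) * (b 0 * c 1 - b 1 * c 0) = 0 := by
        linear_combination c 1 * ha0 - b 1 * ha1
      exact (mul_eq_zero.mp h).resolve_left hA
    · have h : star (a 1) * (b 0 * c 1 - b 1 * c 0) = 0 := by
        linear_combination b 0 * ha1 - c 0 * ha0
      exact (mul_eq_zero.mp h).resolve_left hA
  have hbb := dot_self_ne_zero b hb
  have hbbval : dot b b = star (b 0) * b 0 + star (b 1) * b 1 := by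
    simp [dot, Fin.sum_univ_two]
  apply hc
  funext p
  fin_cases p
  · have h : dot b b * c 0 = 0 := by
      rw [hbbval]; linear_combination b 0 * hb1 - star (b 1) * hD
    exact (mul_eq_zero.mp h).resolve_left hbb
  · have h : dot b b * c 1 = 0 := by
      rw [hbbval]; linear_combination b 1 * hb1 + star (b 0) * hD
    exact (mul_eq_zero.mp h).resolve_left hbb

lemma proj_struct (Q : Matrix (Fin 2) (Fin 2) ℂ) (hQ : Q * Q = Q) (hQH : Qᴴ = Q)
    (h0 : Q ≠ 0) (h1 : Q ≠ 1) :
    ∃ u w : Fin 2 → ℂ, u ≠ 0 ∧ ∀ p i, Q p i = u p * star (w i) := by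
  have hherm : ∀ i j : Fin 2, Q i j = star (Q j i) := by
    intro i j
    have := congrFun (congrFun hQH i) j
    rw [Matrix.conjTranspose_apply] at this
    exact this.symm
  have hm : ∀ i j : Fin 2, Q i 0 * Q 0 j + Q i 1 * Q 1 j = Q i j := by
    intro i j
    have := congrFun (congrFun hQ i) j
    rwa [Matrix.mul_apply, Fin.sum_univ_two] at this
  by_cases hb : Q 0 1 = 0
  · have hc0 : Q 1 0 = 0 := by rw [hherm 1 0, hb, star_zero]
    have e00 := hm 0 0
    have e11 := hm 1 1
    rw [hb, hc0] at e00 e11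
    have ha : Q 0 0 = 0 ∨ Q 0 0 = 1 := by
      rcases mul_eq_zero.mp (show Q 0 0 * (Q 0 0 - 1) = 0 by linear_combination e00) with h | h
      · exact Or.inl h
      · exact Or.inr (by linear_combination h)
    have hd : Q 1 1 = 0 ∨ Q 1 1 = 1 := by
      rcases mul_eq_zero.mp (show Q 1 1 * (Q 1 1 - 1) = 0 by linear_combination e11) with h | h
      · exact Or.inl h
      · exact Or.inr (by linear_combination h)
    rcases ha with ha | ha <;> rcases hd with hd | hd
    · exact absurd (by ext i j; fin_cases i <;> fin_cases j <;>
        simp [ha, hd, hb, hc0]) h0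
    · refine ⟨![0, 1], ![0, 1], ?_, ?_⟩
      · intro h; have := congrFun h 1; simp at this
      · intro p i; fin_cases p <;> fin_cases i <;> simp [ha, hd, hb, hc0]
    · refine ⟨![1, 0], ![1, 0], ?_, ?_⟩
      · intro h; have := congrFun h 0; simp at this
      · intro p i; fin_cases p <;> fin_cases i <;> simp [ha, hd, hb, hc0]
    · exact absurd (by ext i j; fin_cases i <;> fin_cases j <;>
        simp [ha, hd, hb, hc0, Matrix.one_apply]) h1
  · have e00 := hm 0 0
    have e01 := hm 0 1
    have hsum : Q 0 0 + Q 1 1 = 1 := by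
      apply mul_left_cancel₀ hb
      linear_combination e01
    have hc : Q 1 0 = star (Q 0 1) := by rw [hherm 1 0]
    have ha : Q 0 0 ≠ 0 := by
      intro h
      apply hb
      have : Q 0 1 * Q 1 0 = 0 := by linear_combination e00 - Q 0 0 * h + h
      rw [hc] at this
      rcases mul_eq_zero.mp this with h' | h'
      · exact h'
      · exact star_eq_zero.mp h'
    have key : Q 0 0 * Q 1 1 = Q 0 1 * Q 1 0 := by
      linear_combination Q 0 0 * hsum - e00
    refine ⟨![Q 0 0, Q 1 0], ![1, star (Q 0 1 * (Q 0 0)⁻¹)], ?_, ?_⟩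
    · intro h; have := congrFun h 0; simp at this; exact ha this
    · intro p i
      fin_cases p <;> fin_cases i <;> simp
      · field_simp
      · rw [show Q 1 0 * (Q 0 1 * (Q 0 0)⁻¹) = Q 0 1 * Q 1 0 * (Q 0 0)⁻¹ by ring, ← key]
        field_simp

/-- Given three nonzero pairwise orthogonal vectors in ℂ² ⊗ ℂ² of which at most one is a
product vector, any orthogonal projector Q of Alice keeping all three images nonzero and
pairwise orthogonal must be trivial: Q = 0 or Q = I. -/
theorem stmt14 (v : Fin 3 → (Fin 2 × Fin 2 → ℂ))
    (hnz : ∀ i, v i ≠ 0)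
    (horth : ∀ i j, i ≠ j → dot (v i) (v j) = 0)
    (hprod : ∀ i j, i ≠ j → prodVec (v i) → ¬ prodVec (v j))
    (Q : Matrix (Fin 2) (Fin 2) ℂ) (hQ : Q * Q = Q) (hQH : Qᴴ = Q)
    (himnz : ∀ i, actQ Q (v i) ≠ 0)
    (himorth : ∀ i j, i ≠ j → dot (actQ Q (v i)) (actQ Q (v j)) = 0) :
    Q = 0 ∨ Q = 1 := by
  by_cases h0 : Q = 0
  · exact Or.inl h0
  by_cases h1 : Q = 1
  · exact Or.inr h1
  exfalso
  obtain ⟨u, w, hu, hQf⟩ := proj_struct Q hQ hQH h0 h1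
  set c : Fin 3 → Fin 2 → ℂ := fun k b => ∑ i, star (w i) * v k (i, b) with hcdef
  have hact : ∀ k p, actQ Q (v k) p = u p.1 * c k p.2 := by
    intro k p
    simp only [actQ, hcdef]
    rw [Finset.mul_sum]
    refine Finset.sum_congr rfl fun i _ => ?_
    rw [hQf]; ring
  have hcnz : ∀ k, c k ≠ 0 := by
    intro k hk
    apply himnz k
    funext p
    rw [hact k p, hk]
    simp
  have hdot : ∀ k l, k ≠ l → dot (c k) (c l) = 0 := by
    intro k l hkl
    have h := himorth k l hkl
    have heq : dot (actQ Q (v k)) (actQ Q (v l)) = dot u u * dot (c k) (c l) := by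
      simp only [dot, Fintype.sum_prod_type, Finset.sum_mul_sum]
      refine Finset.sum_congr rfl fun a _ => Finset.sum_congr rfl fun b' _ => ?_
      rw [hact k (a, b'), hact l (a, b')]
      simp only [star_mul']
      ring
    rw [heq] at h
    exact (mul_eq_zero.mp h).resolve_left (dot_self_ne_zero u hu)
  exact no_three_orth (c 0) (c 1) (c 2) (hcnz 0) (hcnz 1) (hcnz 2)
    (hdot 0 1 (by decide)) (hdot 0 2 (by decide)) (hdot 1 2 (by decide))
end
end

section
/- There is no orthonormal basis {|a⟩, |a^⊥⟩} of Alice's qubit ℂ² such that, writing each of the three states |00⟩+|11⟩, |00⟩−|11⟩, |01⟩−|10⟩ of ℂ² ⊗ ℂ² as |a⟩|η_i⟩ + |a^⊥⟩|ν_i⟩, the Bob-side vectors satisfy ⟨η_i|η_j⟩ = 0 and ⟨ν_i|ν_j⟩ = 0 for all i ≠ j. -/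
/-!
Orthonormality of `a, a⊥` forces `η_i = (⟨a| ⊗ 1) ψ_i`, so the `η_i` are determined by `a` alone:
with `(u, v)` the conjugate coordinates of `a`, they are `(u, v)`, `(u, -v)`, `(-v, u)`.
Their pairwise orthogonality gives `|u| = |v|` and `ū v = 0`, hence `a = 0`, contradicting `‖a‖ = 1`.
-/

noncomputable section

def k (i j : Fin 2) : Fin 2 × Fin 2 → ℂ := fun p => if p = (i, j) then 1 else 0

/-- The three states |00⟩+|11⟩, |00⟩−|11⟩, |01⟩−|10⟩. -/
def w : Fin 3 → (Fin 2 × Fin 2 → ℂ) := ![k 0 0 + k 1 1, k 0 0 - k 1 1, k 0 1 - k 1 0]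

def partialDot {m n : Type*} [Fintype m] (a : m → ℂ) (ψ : m × n → ℂ) : n → ℂ :=
  fun q => ∑ x, star (a x) * ψ (x, q)

lemma partialDot_eq_of_decomp {m n : Type*} [Fintype m] {a b : m → ℂ} {η ν : n → ℂ}
    (ha : dot a a = 1) (hab : dot a b = 0) :
    partialDot a (fun p => a p.1 * η p.2 + b p.1 * ν p.2) = η := by
  funext q
  calc ∑ x, star (a x) * (a x * η q + b x * ν q)
      = dot a a * η q + dot a b * ν q := by
        simp only [dot, Finset.sum_mul, ← Finset.sum_add_distrib]
        exact Finset.sum_congr rfl fun x _ => by ring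
    _ = η q := by rw [ha, hab]; ring

lemma partialDot_w (a : Fin 2 → ℂ) :
    partialDot a (w 0) = ![star (a 0), star (a 1)] ∧
    partialDot a (w 1) = ![star (a 0), -star (a 1)] ∧
    partialDot a (w 2) = ![-star (a 1), star (a 0)] := by
  refine ⟨?_, ?_, ?_⟩ <;> funext q <;> fin_cases q <;>
    simp [partialDot, w, k]

lemma eq_zero_of_pairwise_dot_eq_zero {u v : ℂ}
    (h01 : dot ![u, v] ![u, -v] = 0) (h02 : dot ![u, v] ![-v, u] = 0)
    (h12 : dot ![u, -v] ![-v, u] = 0) : u = 0 ∧ v = 0 := by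
  simp only [dot, Fin.sum_univ_two, Matrix.cons_val_zero, Matrix.cons_val_one,
    star_neg] at h01 h02 h12
  have huv : star u * v = 0 := by linear_combination (-(1 : ℂ) / 2) * (h02 + h12)
  have hnorm : star u * u = star v * v := by linear_combination h01
  rcases mul_eq_zero.mp huv with hu | hv
  · rw [star_eq_zero] at hu
    exact ⟨hu, by simpa [hu] using hnorm.symm⟩
  · exact ⟨by simpa [hv] using hnorm, hv⟩

/-- The Walgate–Hardy condition fails for the three states: there is no orthonormal basis
{|a⟩, |a⊥⟩} of Alice's qubit such that writing each state as |a⟩|η_i⟩ + |a⊥⟩|ν_i⟩ the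
{η_i} are pairwise orthogonal and the {ν_i} are pairwise orthogonal. -/
theorem stmt19 :
    ¬ ∃ a aperp : Fin 2 → ℂ,
      dot a a = 1 ∧ dot aperp aperp = 1 ∧ dot a aperp = 0 ∧
      ∃ η ν : Fin 3 → (Fin 2 → ℂ),
        (∀ i, w i = fun p => a p.1 * η i p.2 + aperp p.1 * ν i p.2) ∧
        (∀ i j, i ≠ j → dot (η i) (η j) = 0) ∧
        (∀ i j, i ≠ j → dot (ν i) (ν j) = 0) := by
  rintro ⟨a, b, ha, -, hab, η, ν, hw, hη, -⟩
  have hη_eq (i : Fin 3) : η i = partialDot a (w i) := by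
    rw [hw i, partialDot_eq_of_decomp ha hab]
  obtain ⟨h0, h1, h2⟩ := partialDot_w a
  have hzero := eq_zero_of_pairwise_dot_eq_zero
    (by simpa only [hη_eq, h0, h1] using hη 0 1 (by decide))
    (by simpa only [hη_eq, h0, h2] using hη 0 2 (by decide))
    (by simpa only [hη_eq, h1, h2] using hη 1 2 (by decide))
  simp only [star_eq_zero] at hzero
  simp [dot, Fin.sum_univ_two, hzero.1, hzero.2] at ha
end
end
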